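/- arXiv:1611.08385 — 3 statements merged into one kernel-verified Lean document; each statement's English description precedes it below -/
import Mathlib

section
/- Let r ≥ 1, let g₀ = (1/√2)[[i·I_r, I_r],[−I_r, −i·I_r]], let w₁ be a real skew-symmetric r×r matrix and w₁', u, v real symmetric r×r matrices. Then g₀⁻¹·[[w₁ + i·w₁', u − i·v],[u + i·v, w₁ − i·w₁']]·g₀ = [[w₁ + v, w₁' − u],[−w₁' − u, w₁ − v]]; in particular the conjugated matrix has all entries real and lies in 𝔰𝔭(r,ℝ) = {Y ∈ M_{2r}(ℝ) : YᵀJ + JY = 0}, J = [[0,−I_r],[I_r,0]]. -/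
open Matrix Complex

/-- The Cayley-type element `g₀ = (1/√2)[[i·I_r, I_r],[−I_r, −i·I_r]]`. -/
noncomputable def gzero (r : ℕ) : Matrix (Fin r ⊕ Fin r) (Fin r ⊕ Fin r) ℂ :=
  ((Real.sqrt 2 : ℂ))⁻¹ •
    Matrix.fromBlocks (Complex.I • 1) 1 (-1) (-(Complex.I • 1))

/-- `g₀⁻¹ = (1/√2)[[−i·I_r, −I_r],[I_r, i·I_r]]`. -/
noncomputable def gzeroInv (r : ℕ) : Matrix (Fin r ⊕ Fin r) (Fin r ⊕ Fin r) ℂ :=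
  ((Real.sqrt 2 : ℂ))⁻¹ •
    Matrix.fromBlocks (-(Complex.I • 1)) (-1) 1 (Complex.I • 1)

/-- The real symplectic form matrix `J = [[0,−I_r],[I_r,0]]`. -/
noncomputable def JsympR (r : ℕ) : Matrix (Fin r ⊕ Fin r) (Fin r ⊕ Fin r) ℝ :=
  Matrix.fromBlocks 0 (-1) 1 0

/-- for `w₁` real skew-symmetric and `w₁', u, v` real symmetric,
`g₀⁻¹·[[w₁ + i·w₁', u − i·v],[u + i·v, w₁ − i·w₁']]·g₀ = [[w₁+v, w₁'−u],[−w₁'−u, w₁−v]]`,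
a matrix with real entries lying in `𝔰𝔭(r,ℝ)`. -/
theorem gzeroInv_conj_realform (r : ℕ) (hr : 1 ≤ r)
    (w₁ w₁' u v : Matrix (Fin r) (Fin r) ℝ)
    (hw₁ : w₁ᵀ = -w₁) (hw₁' : w₁'ᵀ = w₁') (hu : uᵀ = u) (hv : vᵀ = v) :
    gzeroInv r *
        Matrix.fromBlocks
          (w₁.map Complex.ofReal + Complex.I • w₁'.map Complex.ofReal)
          (u.map Complex.ofReal - Complex.I • v.map Complex.ofReal)
          (u.map Complex.ofReal + Complex.I • v.map Complex.ofReal)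
          (w₁.map Complex.ofReal - Complex.I • w₁'.map Complex.ofReal) *
      gzero r =
      (Matrix.fromBlocks (w₁ + v) (w₁' - u) (-w₁' - u) (w₁ - v)).map Complex.ofReal ∧
    (Matrix.fromBlocks (w₁ + v) (w₁' - u) (-w₁' - u) (w₁ - v))ᵀ * JsympR r +
        JsympR r * Matrix.fromBlocks (w₁ + v) (w₁' - u) (-w₁' - u) (w₁ - v) = 0 := by
  constructor
  · rw [gzeroInv, gzero]
    simp only [Matrix.smul_mul, Matrix.mul_smul, smul_smul]
    have h2 : ((Real.sqrt 2 : ℂ))⁻¹ * ((Real.sqrt 2 : ℂ))⁻¹ = (2:ℂ)⁻¹ := by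
      rw [← mul_inv, ← Complex.ofReal_mul]
      norm_num [Real.mul_self_sqrt]
    rw [h2, Matrix.fromBlocks_multiply, Matrix.fromBlocks_multiply,
      inv_smul_eq_iff₀ (by norm_num : (2:ℂ) ≠ 0),
      Matrix.fromBlocks_map, Matrix.fromBlocks_smul, Matrix.fromBlocks_inj]
    have hm : ∀ (A B : Matrix (Fin r) (Fin r) ℝ), (A + B).map Complex.ofReal
        = A.map Complex.ofReal + B.map Complex.ofReal := fun A B => by
      ext i j; simp
    have hs : ∀ (A B : Matrix (Fin r) (Fin r) ℝ), (A - B).map Complex.ofReal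
        = A.map Complex.ofReal - B.map Complex.ofReal := fun A B => by
      ext i j; simp
    have hn : ∀ (A : Matrix (Fin r) (Fin r) ℝ), (-A).map Complex.ofReal
        = -(A.map Complex.ofReal) := fun A => by
      ext i j; simp
    refine ⟨?_, ?_, ?_, ?_⟩ <;>
      simp only [hm, hs, hn, Matrix.smul_mul, Matrix.mul_smul, smul_smul,
        Complex.I_mul_I, neg_smul, one_smul, Matrix.neg_mul, Matrix.mul_neg,
        Matrix.one_mul, Matrix.mul_one, smul_add, smul_sub, two_smul,
        neg_neg, smul_neg] <;>
      abel
  · rw [JsympR, Matrix.fromBlocks_transpose, Matrix.fromBlocks_multiply,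
      Matrix.fromBlocks_multiply, Matrix.fromBlocks_add,
      show (0 : Matrix (Fin r ⊕ Fin r) (Fin r ⊕ Fin r) ℝ) = Matrix.fromBlocks 0 0 0 0 from
        (Matrix.fromBlocks_zero).symm, Matrix.fromBlocks_inj]
    refine ⟨?_, ?_, ?_, ?_⟩ <;>
      simp only [Matrix.transpose_add, Matrix.transpose_sub, Matrix.transpose_neg,
        hw₁, hw₁', hu, hv, Matrix.mul_neg, Matrix.neg_mul, Matrix.mul_one,
        Matrix.one_mul, Matrix.mul_zero, Matrix.zero_mul, neg_neg] <;>
      abel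
end

section
/- Let r ≥ 1, let E₁₁ = diag(1,0,…,0) ∈ M_r(ℂ), and let e₁₁ = [[0, E₁₁],[0, 0]] ∈ M_{2r}(ℂ). Then {l·e₁₁·l⁻¹ : l = [[l₁, 0],[0, (l₁ᵀ)⁻¹]], l₁ ∈ GL(r,ℂ)} = {[[0, z·zᵀ],[0, 0]] : z ∈ ℂʳ, z ≠ 0}, where z·zᵀ denotes the r×r matrix with (i,j) entry z_i·z_j. -/
/-! Since `E₁₁ = e eᵀ` for the first basis vector `e`, and conjugation by `[[l, 0], [0, (lᵀ)⁻¹]]`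
acts on the upper right block by `B ↦ l B lᵀ`, the conjugate of `e₁₁` has upper right block
`(l e)(l e)ᵀ`. As `l` runs over `GL(r)`, `l e` runs over all nonzero vectors, because `GL(r)` acts
transitively on them. -/

open Matrix

theorem LinearEquiv.exists_apply_eq_of_ne_zero {K V : Type*} [Field K] [AddCommGroup V]
    [Module K V] {x y : V} (hx : x ≠ 0) (hy : y ≠ 0) : ∃ g : V ≃ₗ[K] V, g x = y := by
  let f := (LinearEquiv.toSpanNonzeroSingleton K V x hx).symm ≪≫ₗ
    LinearEquiv.toSpanNonzeroSingleton K V y hy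
  obtain ⟨g, hg⟩ := Submodule.exists_linearEquiv_restrict_eq f
  refine ⟨g, ?_⟩
  have hx1 : (LinearEquiv.toSpanNonzeroSingleton K V x hx).symm ⟨x, _⟩ = 1 :=
    (LinearEquiv.symm_apply_eq _).mpr (LinearEquiv.toSpanNonzeroSingleton_one K V x hx).symm
  have hfx := hg ⟨x, Submodule.mem_span_singleton_self x⟩
  simp only [f, LinearEquiv.trans_apply, hx1, LinearEquiv.toSpanNonzeroSingleton_one] at hfx
  exact hfx.symm

namespace Matrix

variable {n R : Type*} [Fintype n]

theorem exists_isUnit_mulVec_eq [DecidableEq n] {K : Type*} [Field K] {x y : n → K}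
    (hx : x ≠ 0) (hy : y ≠ 0) :
    ∃ l : Matrix n n K, IsUnit l ∧ l *ᵥ x = y := by
  obtain ⟨g, hg⟩ := LinearEquiv.exists_apply_eq_of_ne_zero (K := K) hx hy
  have hmulVec : (LinearMap.toMatrix' (g : (n → K) →ₗ[K] n → K)).mulVec = g :=
    funext (LinearMap.toMatrix'_mulVec _)
  refine ⟨LinearMap.toMatrix' g, ?_, by rw [LinearMap.toMatrix'_mulVec]; exact hg⟩
  rw [← mulVec_injective_iff_isUnit, hmulVec]
  exact g.injective

theorem mul_vecMulVec_mul_transpose [CommSemiring R] (l : Matrix n n R) (u v : n → R) :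
    l * vecMulVec u v * lᵀ = vecMulVec (l *ᵥ u) (l *ᵥ v) := by
  rw [mul_vecMulVec, vecMulVec_mul, vecMul_transpose]

theorem inv_fromBlocks_transpose_inv [DecidableEq n] [CommRing R] {l : Matrix n n R}
    (hl : IsUnit l) :
    (fromBlocks l 0 0 (lᵀ)⁻¹)⁻¹ = fromBlocks l⁻¹ 0 0 lᵀ := by
  have hlT : IsUnit lᵀ.det := by rwa [det_transpose, ← isUnit_iff_isUnit_det]
  rw [inv_fromBlocks_zero₂₁_of_isUnit_iff _ _ _ (by rw [isUnit_nonsing_inv_iff, isUnit_transpose]),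
    nonsing_inv_nonsing_inv _ hlT]
  simp

theorem blockDiagonal_mul_upperBlock_mul_blockDiagonal {m : Type*} [Fintype m] [Semiring R]
    (A A' : Matrix m m R) (D D' : Matrix n n R) (B : Matrix m n R) :
    fromBlocks A 0 0 D * fromBlocks 0 B 0 0 * fromBlocks A' 0 0 D' =
      fromBlocks 0 (A * B * D') 0 0 := by
  simp [fromBlocks_multiply]

theorem levi_conj_vecMulVec [DecidableEq n] [CommRing R] {l : Matrix n n R} (hl : IsUnit l)
    (u : n → R) :
    fromBlocks l 0 0 (lᵀ)⁻¹ * fromBlocks 0 (vecMulVec u u) 0 0 * (fromBlocks l 0 0 (lᵀ)⁻¹)⁻¹ =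
      fromBlocks 0 (vecMulVec (l *ᵥ u) (l *ᵥ u)) 0 0 := by
  rw [inv_fromBlocks_transpose_inv hl, blockDiagonal_mul_upperBlock_mul_blockDiagonal,
    mul_vecMulVec_mul_transpose]

end Matrix

/-- with `e₁₁ = [[0,E₁₁],[0,0]]`, the orbit of `e₁₁` under conjugation by the
block-diagonal matrices `l = [[l₁,0],[0,(l₁ᵀ)⁻¹]]`, `l₁ ∈ GL(r,ℂ)`, equals
`{[[0, z·zᵀ],[0,0]] : z ∈ ℂʳ, z ≠ 0}`. -/
theorem levi_orbit_e11 (r : ℕ) (hr : 1 ≤ r) :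
    {M : Matrix (Fin r ⊕ Fin r) (Fin r ⊕ Fin r) ℂ |
        ∃ l₁ : Matrix (Fin r) (Fin r) ℂ, IsUnit l₁ ∧
          M = Matrix.fromBlocks l₁ 0 0 (l₁ᵀ)⁻¹ *
              Matrix.fromBlocks 0 (Matrix.single (⟨0, hr⟩ : Fin r) (⟨0, hr⟩ : Fin r) (1 : ℂ)) 0 0 *
              (Matrix.fromBlocks l₁ 0 0 (l₁ᵀ)⁻¹)⁻¹} =
      {M : Matrix (Fin r ⊕ Fin r) (Fin r ⊕ Fin r) ℂ |
        ∃ z : Fin r → ℂ, z ≠ 0 ∧ M = Matrix.fromBlocks 0 (Matrix.vecMulVec z z) 0 0} := by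
  set e : Fin r → ℂ := Pi.single ⟨0, hr⟩ 1
  have he : e ≠ 0 := Pi.single_ne_zero_iff.mpr one_ne_zero
  rw [single_eq_single_vecMulVec_single]
  ext M
  constructor
  · rintro ⟨l, hl, rfl⟩
    exact ⟨l *ᵥ e, (mulVec_injective_iff_isUnit.mpr hl).ne_iff' (mulVec_zero l) |>.mpr he,
      levi_conj_vecMulVec hl e⟩
  · rintro ⟨z, hz, rfl⟩
    obtain ⟨l, hl, rfl⟩ := exists_isUnit_mulVec_eq he hz
    exact ⟨l, hl, (levi_conj_vecMulVec hl e).symm⟩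
end

section
/- Let r ≥ 1, let k ≥ 0 be an integer, and let φ : ℂʳ → ℂ be a continuous function that is positively homogeneous of degree k, i.e. φ(t·z) = tᵏ·φ(z) for all t > 0 and z ∈ ℂʳ. Then ∫_{ℂʳ} |φ(z)|² e^{−‖z‖²} dλ(z) = (k+r)! · ∫_{ℂʳ} |φ(z)|² (1 + ‖z‖²)^{−(k+r+1)} dλ(z), where λ is Lebesgue measure on ℂʳ ≅ ℝ^{2r} and ‖z‖² = Σ_{j=1}^r |z_j|² (both integrals being finite). -/
/-!
The Gamma integral gives `n! (1 + Q)^{-(n+1)} = ∫₀^∞ tⁿ e^{-t} e^{-tQ} dt` for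
`Q = ∑ |z_j|² ≥ 0` and `n = k + r`. Integrate against `|φ|²` and exchange the integrals (Tonelli
in `ℝ≥0∞`, so that no integrability is needed). The substitution `z ↦ √t z` turns the inner
integral `∫ |φ|² e^{-tQ}` into `t^{-n} ∫ |φ|² e^{-Q}`, because `|φ|²` is homogeneous of degree
`2k`, `Q` of degree `2`, and `ℂʳ` has real dimension `2r`. What is left is `∫₀^∞ e^{-t} dt = 1`.

The Gaussian side is finite because `|φ|² ≤ C Qᵏ` (compactness of the unit ball) and
`Qᵏ e^{-Q} ≤ 2ᵏ k! e^{-Q/2}`, a product of Gaussians on the factors of `ℂʳ`.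
-/

open MeasureTheory Set Real Module
open scoped ENNReal

theorem lintegral_pow_mul_exp_neg_mul_Ioi (n : ℕ) {c : ℝ} (hc : 0 < c) :
    ∫⁻ t in Ioi 0, ENNReal.ofReal (t ^ n * exp (-(c * t))) =
      ENNReal.ofReal (n.factorial / c ^ (n + 1)) := by
  have h := integral_rpow_mul_exp_neg_mul_Ioi (a := n + 1) (by positivity) hc
  rw [add_sub_cancel_right, Gamma_nat_eq_factorial, ← Nat.cast_succ] at h
  simp only [Real.rpow_natCast, one_div, inv_pow] at h
  have hint : IntegrableOn (fun t : ℝ ↦ t ^ n * exp (-(c * t))) (Ioi 0) :=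
    .of_integral_ne_zero (by rw [h]; positivity)
  rw [← ofReal_integral_eq_lintegral_ofReal hint, h, div_eq_inv_mul]
  refine (ae_restrict_iff' measurableSet_Ioi).2 (.of_forall fun t (ht : 0 < t) ↦ ?_)
  positivity

theorem pow_mul_exp_neg_le {x : ℝ} (hx : 0 ≤ x) (k : ℕ) :
    x ^ k * exp (-x) ≤ 2 ^ k * k.factorial * exp (-(x / 2)) := by
  have hk := Real.pow_div_factorial_le_exp (x / 2) (by positivity) k
  rw [div_le_iff₀ (by positivity)] at hk
  have hsplit : exp (-x) = exp (-(x / 2)) * exp (-(x / 2)) := by rw [← exp_add]; ring_nf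
  have hcancel : exp (x / 2) * exp (-(x / 2)) = 1 := by rw [← exp_add, add_neg_cancel, exp_zero]
  calc x ^ k * exp (-x) = 2 ^ k * (x / 2) ^ k * exp (-(x / 2)) * exp (-(x / 2)) := by
        rw [hsplit, div_pow, mul_div_cancel₀ _ (by positivity)]; ring
    _ ≤ 2 ^ k * (exp (x / 2) * k.factorial) * exp (-(x / 2)) * exp (-(x / 2)) := by gcongr
    _ = 2 ^ k * k.factorial * exp (-(x / 2)) := by
        linear_combination (2 ^ k * k.factorial * exp (-(x / 2))) * hcancel

def IsPosHomogeneous {E F : Type*} [AddCommGroup E] [Module ℝ E] [AddCommGroup F] [Module ℝ F]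
    (g : E → F) (p : ℕ) : Prop :=
  ∀ s : ℝ, 0 < s → ∀ x, g (s • x) = s ^ p • g x

theorem IsPosHomogeneous.exists_norm_le_mul_norm_pow {E F : Type*} [NormedAddCommGroup E]
    [NormedSpace ℝ E] [ProperSpace E] [NormedAddCommGroup F] [NormedSpace ℝ F] {g : E → F}
    {p : ℕ} (hhom : IsPosHomogeneous g p) (hg : Continuous g) :
    ∃ C, 0 ≤ C ∧ ∀ x, ‖g x‖ ≤ C * ‖x‖ ^ p := by
  obtain ⟨w, -, hw⟩ := (isCompact_closedBall (0 : E) 1).exists_isMaxOn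
    ⟨0, Metric.mem_closedBall_self zero_le_one⟩ hg.norm.continuousOn
  refine ⟨‖g w‖, norm_nonneg _, fun x ↦ ?_⟩
  rcases eq_or_ne x 0 with rfl | hx
  · rcases Nat.eq_zero_or_pos p with rfl | hp
    · simpa using hw (Metric.mem_closedBall_self zero_le_one)
    · have h2 := congrArg norm (hhom 2 two_pos 0)
      rw [smul_zero, norm_smul, Real.norm_of_nonneg (by positivity)] at h2
      have : ‖g 0‖ = 0 := by
        nlinarith [one_lt_pow₀ (one_lt_two (α := ℝ)) hp.ne', norm_nonneg (g 0)]
      simp [this, zero_pow hp.ne']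
  · have hxpos : 0 < ‖x‖ := norm_pos_iff.2 hx
    have hunit : ‖x‖⁻¹ • x ∈ Metric.closedBall (0 : E) 1 := by
      simp [norm_smul, hxpos.ne']
    have hscale : g x = ‖x‖ ^ p • g (‖x‖⁻¹ • x) := by
      rw [← hhom ‖x‖ hxpos, smul_smul, mul_inv_cancel₀ hxpos.ne', one_smul]
    rw [hscale, norm_smul, norm_pow, norm_norm, mul_comm]
    exact mul_le_mul_of_nonneg_right (hw hunit) (by positivity)

section AddHaar

variable {E : Type*} [NormedAddCommGroup E] [NormedSpace ℝ E] [FiniteDimensional ℝ E]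
  [MeasurableSpace E] [BorelSpace E] (μ : Measure E) [μ.IsAddHaarMeasure]

theorem lintegral_comp_smul (f : E → ℝ≥0∞) {c : ℝ} (hc : c ≠ 0) :
    ∫⁻ x, f (c • x) ∂μ = ENNReal.ofReal |(c ^ finrank ℝ E)⁻¹| * ∫⁻ x, f x ∂μ := by
  rw [← smul_eq_mul, ← lintegral_smul_measure, ← Measure.map_addHaar_smul μ hc]
  exact (lintegral_map_equiv f (Homeomorph.smulOfNeZero c hc).toMeasurableEquiv).symm

variable {μ} {g Q : E → ℝ} {p n : ℕ}

theorem ofReal_pow_mul_lintegral_mul_exp_neg_sq_mul (hg : IsPosHomogeneous g p)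
    (hQ : IsPosHomogeneous Q 2) {s : ℝ} (hs : 0 < s) :
    ENNReal.ofReal (s ^ (p + finrank ℝ E)) *
        ∫⁻ x, ENNReal.ofReal (g x * exp (-(s ^ 2 * Q x))) ∂μ =
      ∫⁻ x, ENNReal.ofReal (g x * exp (-Q x)) ∂μ := by
  have hscale := lintegral_comp_smul μ (fun x ↦ ENNReal.ofReal (g x * exp (-Q x))) hs.ne'
  simp only [hg s hs, hQ s hs, smul_eq_mul, mul_assoc,
    ENNReal.ofReal_mul (pow_nonneg hs.le p)] at hscale
  rw [lintegral_const_mul' _ _ ENNReal.ofReal_ne_top] at hscale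
  have hdet : ENNReal.ofReal (s ^ finrank ℝ E) * ENNReal.ofReal |(s ^ finrank ℝ E)⁻¹| = 1 := by
    rw [abs_of_pos (by positivity), ← ENNReal.ofReal_mul (by positivity),
      mul_inv_cancel₀ (by positivity), ENNReal.ofReal_one]
  calc _ = ENNReal.ofReal (s ^ finrank ℝ E) *
        (ENNReal.ofReal (s ^ p) * ∫⁻ x, ENNReal.ofReal (g x * exp (-(s ^ 2 * Q x))) ∂μ) := by
        rw [← mul_assoc, ← ENNReal.ofReal_mul (by positivity), ← pow_add, add_comm]
    _ = _ := by rw [hscale, ← mul_assoc, hdet, one_mul]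

theorem ofReal_factorial_mul_lintegral_mul_inv_one_add_pow (hgm : Measurable g)
    (hQm : Measurable Q) (hQ0 : ∀ x, 0 ≤ Q x) (hg : IsPosHomogeneous g p)
    (hQ : IsPosHomogeneous Q 2) (hn : p + finrank ℝ E = 2 * n) :
    ENNReal.ofReal n.factorial * ∫⁻ x, ENNReal.ofReal (g x * ((1 + Q x) ^ (n + 1))⁻¹) ∂μ =
      ∫⁻ x, ENNReal.ofReal (g x * exp (-Q x)) ∂μ := by
  set B := ∫⁻ x, ENNReal.ofReal (g x * exp (-Q x)) ∂μ with hB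
  have hgamma (x : E) :
      ENNReal.ofReal n.factorial * ENNReal.ofReal (g x * ((1 + Q x) ^ (n + 1))⁻¹) =
        ∫⁻ t in Ioi 0, ENNReal.ofReal (g x) * ENNReal.ofReal (t ^ n * exp (-((1 + Q x) * t))) := by
    have hQx := hQ0 x
    rw [lintegral_const_mul' _ _ ENNReal.ofReal_ne_top,
      lintegral_pow_mul_exp_neg_mul_Ioi n (by positivity),
      ← ENNReal.ofReal_mul (by positivity : (0 : ℝ) ≤ n.factorial),
      ← ENNReal.ofReal_mul' (by positivity : (0 : ℝ) ≤ n.factorial / (1 + Q x) ^ (n + 1))]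
    congr 1
    ring
  have hslice (t : ℝ) (ht : 0 < t) :
      ∫⁻ x, ENNReal.ofReal (g x) * ENNReal.ofReal (t ^ n * exp (-((1 + Q x) * t))) ∂μ =
        ENNReal.ofReal (exp (-t)) * B := by
    have hsq : √t ^ 2 = t := sq_sqrt ht.le
    have hscale := ofReal_pow_mul_lintegral_mul_exp_neg_sq_mul (μ := μ) hg hQ (sqrt_pos.2 ht)
    rw [hn, pow_mul, hsq] at hscale
    rw [hB, ← hscale, ← mul_assoc, ← ENNReal.ofReal_mul (exp_pos _).le, mul_comm (exp _),
      ← lintegral_const_mul' _ _ ENNReal.ofReal_ne_top]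
    refine lintegral_congr fun x ↦ ?_
    rw [← ENNReal.ofReal_mul' (by positivity), ← ENNReal.ofReal_mul (by positivity)]
    congr 1
    rw [show -((1 + Q x) * t) = -t + -(t * Q x) by ring, exp_add]
    ring
  have hexp : ∫⁻ t in Ioi 0, ENNReal.ofReal (exp (-t)) = 1 := by
    simpa using lintegral_pow_mul_exp_neg_mul_Ioi 0 one_pos
  calc ENNReal.ofReal n.factorial * ∫⁻ x, ENNReal.ofReal (g x * ((1 + Q x) ^ (n + 1))⁻¹) ∂μ
      = ∫⁻ x, (∫⁻ t in Ioi 0, ENNReal.ofReal (g x) *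
          ENNReal.ofReal (t ^ n * exp (-((1 + Q x) * t)))) ∂μ := by
        rw [← lintegral_const_mul' _ _ ENNReal.ofReal_ne_top]
        exact lintegral_congr hgamma
    _ = ∫⁻ t in Ioi 0, ∫⁻ x, ENNReal.ofReal (g x) *
          ENNReal.ofReal (t ^ n * exp (-((1 + Q x) * t))) ∂μ :=
        lintegral_lintegral_swap (by fun_prop)
    _ = ∫⁻ t in Ioi 0, ENNReal.ofReal (exp (-t)) * B :=
        setLIntegral_congr_fun measurableSet_Ioi hslice
    _ = B := by rw [lintegral_mul_const _ (by fun_prop), hexp, one_mul]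

theorem integrable_mul_inv_one_add_pow (hgm : Measurable g) (hQm : Measurable Q)
    (hg0 : ∀ x, 0 ≤ g x) (hQ0 : ∀ x, 0 ≤ Q x) (hg : IsPosHomogeneous g p)
    (hQ : IsPosHomogeneous Q 2) (hn : p + finrank ℝ E = 2 * n)
    (hint : Integrable (fun x ↦ g x * exp (-Q x)) μ) :
    Integrable (fun x ↦ g x * ((1 + Q x) ^ (n + 1))⁻¹) μ := by
  refine ⟨by fun_prop, (hasFiniteIntegral_iff_ofReal (.of_forall fun x ↦ ?_)).2 ?_⟩
  · have := hQ0 x; have := hg0 x; positivity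
  calc _ ≤ ENNReal.ofReal n.factorial *
        ∫⁻ x, ENNReal.ofReal (g x * ((1 + Q x) ^ (n + 1))⁻¹) ∂μ :=
        le_mul_of_one_le_left zero_le (ENNReal.one_le_ofReal.2 (mod_cast n.factorial_pos))
    _ < ⊤ := by
        rw [ofReal_factorial_mul_lintegral_mul_inv_one_add_pow hgm hQm hQ0 hg hQ hn]
        exact (hasFiniteIntegral_iff_ofReal (.of_forall fun x ↦ by have := hg0 x; positivity)).1
          hint.2

theorem integral_mul_exp_neg_eq_factorial_mul (hgm : Measurable g) (hQm : Measurable Q)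
    (hg0 : ∀ x, 0 ≤ g x) (hQ0 : ∀ x, 0 ≤ Q x) (hg : IsPosHomogeneous g p)
    (hQ : IsPosHomogeneous Q 2) (hn : p + finrank ℝ E = 2 * n)
    (hint : Integrable (fun x ↦ g x * exp (-Q x)) μ) :
    ∫ x, g x * exp (-Q x) ∂μ = n.factorial * ∫ x, g x * ((1 + Q x) ^ (n + 1))⁻¹ ∂μ := by
  have hint' := integrable_mul_inv_one_add_pow hgm hQm hg0 hQ0 hg hQ hn hint
  rw [integral_eq_lintegral_of_nonneg_ae (.of_forall fun x ↦ by have := hg0 x; positivity)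
      hint.1, integral_eq_lintegral_of_nonneg_ae
      (.of_forall fun x ↦ by have := hQ0 x; have := hg0 x; positivity) hint'.1,
    ← ofReal_factorial_mul_lintegral_mul_inv_one_add_pow hgm hQm hQ0 hg hQ hn,
    ENNReal.toReal_mul, ENNReal.toReal_ofReal (by positivity)]

end AddHaar

theorem Complex.integrable_exp_neg_mul_sq_norm {b : ℝ} (hb : 0 < b) :
    Integrable (fun z : ℂ ↦ Real.exp (-(b * ‖z‖ ^ 2))) := by
  have h := Complex.integral_exp_neg_mul_rpow one_le_two hb
  simp only [Real.rpow_two, neg_mul] at h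
  exact .of_integral_ne_zero (by rw [h]; positivity)

section Pi

variable {ι : Type*} [Fintype ι]

theorem integrable_exp_neg_mul_sum_sq_norm {b : ℝ} (hb : 0 < b) :
    Integrable (fun z : ι → ℂ ↦ exp (-(b * ∑ j, ‖z j‖ ^ 2))) := by
  simp only [Finset.mul_sum, ← Finset.sum_neg_distrib, exp_sum]
  exact .fintype_prod fun _ ↦ Complex.integrable_exp_neg_mul_sq_norm hb

theorem sq_norm_le_sum_sq_norm {F : Type*} [SeminormedAddCommGroup F] (z : ι → F) :
    ‖z‖ ^ 2 ≤ ∑ j, ‖z j‖ ^ 2 := by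
  have hle : ‖z‖ ≤ √(∑ j, ‖z j‖ ^ 2) := (pi_norm_le_iff_of_nonneg (by positivity)).2 fun j ↦
    le_sqrt_of_sq_le (Finset.single_le_sum (f := fun i ↦ ‖z i‖ ^ 2) (fun _ _ ↦ by positivity)
      (Finset.mem_univ j))
  simpa [sq_sqrt (by positivity : (0 : ℝ) ≤ ∑ j, ‖z j‖ ^ 2)] using
    pow_le_pow_left₀ (norm_nonneg z) hle 2

theorem finrank_real_pi_complex : finrank ℝ (ι → ℂ) = 2 * Fintype.card ι := by
  simp [Module.finrank_pi_fintype, Complex.finrank_real_complex, mul_comm]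

theorem integrable_mul_exp_neg_sum_sq_norm {g : (ι → ℂ) → ℝ} {k : ℕ}
    (hhom : IsPosHomogeneous g (2 * k)) (hg : Continuous g) :
    Integrable (fun z : ι → ℂ ↦ g z * exp (-∑ j, ‖z j‖ ^ 2)) := by
  obtain ⟨C, hC0, hC⟩ := hhom.exists_norm_le_mul_norm_pow hg
  refine ((integrable_exp_neg_mul_sum_sq_norm (ι := ι) one_half_pos).const_mul
    (C * (2 ^ k * k.factorial))).mono' (by fun_prop) (.of_forall fun z ↦ ?_)
  have hQ0 : 0 ≤ ∑ j, ‖z j‖ ^ 2 := by positivity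
  calc ‖g z * exp (-∑ j, ‖z j‖ ^ 2)‖ = ‖g z‖ * exp (-∑ j, ‖z j‖ ^ 2) := by
        rw [norm_mul, Real.norm_of_nonneg (exp_pos _).le]
    _ ≤ C * (‖z‖ ^ 2) ^ k * exp (-∑ j, ‖z j‖ ^ 2) := by rw [← pow_mul]; gcongr; exact hC z
    _ ≤ C * ((∑ j, ‖z j‖ ^ 2) ^ k * exp (-∑ j, ‖z j‖ ^ 2)) := by
        rw [← mul_assoc]; gcongr; exact sq_norm_le_sum_sq_norm z
    _ ≤ C * (2 ^ k * k.factorial * exp (-((∑ j, ‖z j‖ ^ 2) / 2))) :=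
        mul_le_mul_of_nonneg_left (pow_mul_exp_neg_le hQ0 k) hC0
    _ = C * (2 ^ k * k.factorial) * exp (-(1 / 2 * ∑ j, ‖z j‖ ^ 2)) := by ring_nf

end Pi

theorem fock_norm_eq_invariant_norm_general (r k : ℕ)
    (φ : (Fin r → ℂ) → ℂ) (hcont : Continuous φ)
    (hhom : ∀ t : ℝ, 0 < t → ∀ z : Fin r → ℂ, φ (t • z) = (t : ℂ) ^ k * φ z) :
    Integrable (fun z : Fin r → ℂ => ‖φ z‖ ^ 2 * Real.exp (-(∑ j, ‖z j‖ ^ 2))) ∧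
    Integrable (fun z : Fin r → ℂ =>
      ‖φ z‖ ^ 2 * ((1 + ∑ j, ‖z j‖ ^ 2) ^ (k + r + 1))⁻¹) ∧
    (∫ z : Fin r → ℂ, ‖φ z‖ ^ 2 * Real.exp (-(∑ j, ‖z j‖ ^ 2))) =
      (Nat.factorial (k + r)) *
        ∫ z : Fin r → ℂ, ‖φ z‖ ^ 2 * ((1 + ∑ j, ‖z j‖ ^ 2) ^ (k + r + 1))⁻¹ := by
  set g : (Fin r → ℂ) → ℝ := fun z ↦ ‖φ z‖ ^ 2
  set Q : (Fin r → ℂ) → ℝ := fun z ↦ ∑ j, ‖z j‖ ^ 2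
  have hg : IsPosHomogeneous g (2 * k) := fun s hs z ↦ by
    simp only [g, hhom s hs, smul_eq_mul, norm_mul, norm_pow, Complex.norm_real,
      Real.norm_of_nonneg hs.le, mul_pow, ← pow_mul, mul_comm k 2]
  have hQ : IsPosHomogeneous Q 2 := fun s hs z ↦ by
    simp only [Q, Pi.smul_apply, norm_smul, Real.norm_of_nonneg hs.le, mul_pow, Finset.mul_sum,
      smul_eq_mul]
  have hn : 2 * k + finrank ℝ (Fin r → ℂ) = 2 * (k + r) := by
    rw [finrank_real_pi_complex, Fintype.card_fin, mul_add]
  have hgm : Measurable g := by fun_prop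
  have hQm : Measurable Q := by fun_prop
  have hg0 (z : Fin r → ℂ) : 0 ≤ g z := by positivity
  have hQ0 (z : Fin r → ℂ) : 0 ≤ Q z := by positivity
  have hint := integrable_mul_exp_neg_sum_sq_norm hg (hcont.norm.pow 2)
  exact ⟨hint, integrable_mul_inv_one_add_pow hgm hQm hg0 hQ0 hg hQ hn hint,
    integral_mul_exp_neg_eq_factorial_mul hgm hQm hg0 hQ0 hg hQ hn hint⟩

/-- for `φ : ℂʳ → ℂ` continuous and positively homogeneous of degree `k`,
both integrals below are finite and
`∫ |φ(z)|² e^{−‖z‖²} dλ(z) = (k+r)! · ∫ |φ(z)|² (1+‖z‖²)^{−(k+r+1)} dλ(z)`. -/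
theorem fock_norm_eq_invariant_norm (r k : ℕ) (hr : 1 ≤ r)
    (φ : (Fin r → ℂ) → ℂ) (hcont : Continuous φ)
    (hhom : ∀ t : ℝ, 0 < t → ∀ z : Fin r → ℂ, φ (t • z) = (t : ℂ) ^ k * φ z) :
    Integrable (fun z : Fin r → ℂ => ‖φ z‖ ^ 2 * Real.exp (-(∑ j, ‖z j‖ ^ 2))) ∧
    Integrable (fun z : Fin r → ℂ =>
      ‖φ z‖ ^ 2 * ((1 + ∑ j, ‖z j‖ ^ 2) ^ (k + r + 1))⁻¹) ∧
    (∫ z : Fin r → ℂ, ‖φ z‖ ^ 2 * Real.exp (-(∑ j, ‖z j‖ ^ 2))) =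
      (Nat.factorial (k + r)) *
        ∫ z : Fin r → ℂ, ‖φ z‖ ^ 2 * ((1 + ∑ j, ‖z j‖ ^ 2) ^ (k + r + 1))⁻¹ :=
  fock_norm_eq_invariant_norm_general r k φ hcont hhom
end
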